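/- Let α, β ≥ -1/2 and γ₁, γ₂, κ, κ₁, κ₂ ≥ 0. There exists a constant C depending only on these parameters such that for all θ, φ ∈ (0,π) with θ ≠ φ one has (sin(θ/2)+sin(φ/2))^{2γ₁} (cos(θ/2)+cos(φ/2))^{2γ₂} ∬_{[-1,1]²} dΠ_{α+γ₁+κ+κ₁}(u) dΠ_{β+γ₂+κ+κ₂}(v) / q(θ,φ,u,v)^{α+β+3/2+γ₁+γ₂+κ} ≤ C / μ_{α,β}^+(B(θ, |θ-φ|)). -/

import Mathlib

open MeasureTheory Real Set

noncomputable section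

/-- The Jacobi measure `μ_{α,β}^+` on `(0,π)`: density
`(sin(θ/2))^(2α+1) (cos(θ/2))^(2β+1)` w.r.t. Lebesgue measure on `(0,π)`. -/
def jacobiMeasure (α β : ℝ) : Measure ℝ :=
  (volume.restrict (Ioo 0 π)).withDensity
    (fun θ => ENNReal.ofReal (Real.sin (θ / 2) ^ (2 * α + 1) * Real.cos (θ / 2) ^ (2 * β + 1)))

/-- The ball `B(θ,r) = (θ-r, θ+r) ∩ (0,π)`. -/
def jacobiBall (θ r : ℝ) : Set ℝ := Ioo (θ - r) (θ + r) ∩ Ioo 0 π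

/-- The measure `Π_α` on `[-1,1]`. -/
def PiMeasure (α : ℝ) : Measure ℝ :=
  if α = -(1 / 2) then (2 : ENNReal)⁻¹ • (Measure.dirac (-1) + Measure.dirac 1)
  else
    (volume.restrict (Icc (-1) 1)).withDensity
      (fun u => ENNReal.ofReal
        (Real.Gamma (α + 1) / (Real.sqrt π * Real.Gamma (α + 1 / 2)) * (1 - u ^ 2) ^ (α - 1 / 2)))

/-- `q(θ,φ,u,v) = 1 - u sin(θ/2) sin(φ/2) - v cos(θ/2) cos(φ/2)`. -/
def qfun (θ φ u v : ℝ) : ℝ :=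
  1 - u * Real.sin (θ / 2) * Real.sin (φ / 2) - v * Real.cos (θ / 2) * Real.cos (φ / 2)

/-- `Ψ^{α,β}(t,s) = sinh(t/2) / (cosh(t/2) - 1 + s)^(α+β+2)`. -/
def Psi (α β t s : ℝ) : ℝ :=
  Real.sinh (t / 2) / (Real.cosh (t / 2) - 1 + s) ^ (α + β + 2)

/-- The Jacobi-Poisson kernel `H_t^{α,β}(θ,φ)`. -/
def Hker (α β t θ φ : ℝ) : ℝ :=
  ((2 : ℝ) ^ (-(α + β + 2)) / (jacobiMeasure α β (Ioo 0 π)).toReal) * Real.sinh (t / 2) *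
    ∫ u, ∫ v, 1 / (Real.cosh (t / 2) - 1 + qfun θ φ u v) ^ (α + β + 2)
      ∂(PiMeasure β) ∂(PiMeasure α)

/-- The symmetrized kernel `H̃_t^{α,β}(θ,φ) = (1/4) sin θ sin φ H_t^{α+1,β+1}(θ,φ)`. -/
def Htilde (α β t θ φ : ℝ) : ℝ :=
  (1 / 4) * Real.sin θ * Real.sin φ * Hker (α + 1) (β + 1) t θ φ

end

/-!
Write `s = sin (θ/2)`, `c = cos (θ/2)` (primed for `φ`), `r = |θ - φ|` and
`A = 1 - cos ((θ - φ)/2)`, so that `q = A + s s' (1 - u) + c c' (1 - v)` and `A ≍ r²`.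
For `0 ≤ m ≤ a + 1/2` and `m < p` one has `∫ (A + b (1 - u))^(-p) dΠ_a(u) ≲ A^(m-p) (A + b)^(-m)`:
after scaling this is the bound `(1 - ρ)^(m-p)` for `∫ (1 - ρ u)^(-p) dΠ_a(u)`, obtained by
splitting `(-1, 1]` at `0` and at `ρ`. Integrating out `v` and then `u` bounds the double
integral by `A^(m₁+m₂-p) (A + s s')^(-m₁) (A + c c')^(-m₂)`. Since `A + s s' ≳ (s + r)²`,
`A + c c' ≳ (c + r)²` and `μ(B(θ, r)) ≲ r (s + r)^(2α+1) (c + r)^(2β+1)`, the choice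
`m₁ + m₂ = p - 1/2` cancels all powers of `r`; the leftover powers of `s + r` and `c + r` add
up to `-2κ`, and all of it is put on whichever of `s`, `c` is at least `1/2`.
-/

lemma PiMeasure_neg_half :
    PiMeasure (-(1 / 2)) = (2 : ENNReal)⁻¹ • (Measure.dirac (-1) + Measure.dirac 1) :=
  if_pos rfl

lemma PiMeasure_of_ne {a : ℝ} (ha : a ≠ -(1 / 2)) :
    PiMeasure a = (volume.restrict (Icc (-1) 1)).withDensity (fun u => ENNReal.ofReal
      (Gamma (a + 1) / (√π * Gamma (a + 1 / 2)) * (1 - u ^ 2) ^ (a - 1 / 2))) :=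
  if_neg ha

lemma lintegral_PiMeasure_neg_half (g : ℝ → ENNReal) :
    ∫⁻ u, g u ∂(PiMeasure (-(1 / 2))) = 2⁻¹ * (g (-1) + g 1) := by
  rw [PiMeasure_neg_half, lintegral_smul_measure, lintegral_add_measure, lintegral_dirac,
    lintegral_dirac, smul_eq_mul]

lemma lintegral_PiMeasure_of_ne {a : ℝ} (ha : a ≠ -(1 / 2)) (g : ℝ → ENNReal) :
    ∫⁻ u, g u ∂(PiMeasure a) = ENNReal.ofReal (Gamma (a + 1) / (√π * Gamma (a + 1 / 2))) *
      ∫⁻ u in Ioc (-1) 1, ENNReal.ofReal ((1 - u ^ 2) ^ (a - 1 / 2)) * g u := by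
  rw [PiMeasure_of_ne ha, lintegral_withDensity_eq_lintegral_mul_non_measurable _ (by fun_prop)
      (ae_of_all _ fun _ => ENNReal.ofReal_lt_top), ← Measure.restrict_congr_set Ioc_ae_eq_Icc,
    ← lintegral_const_mul' _ _ ENNReal.ofReal_ne_top]
  refine setLIntegral_congr_fun measurableSet_Ioc fun u hu => ?_
  rw [Pi.mul_apply, ENNReal.ofReal_mul' (rpow_nonneg (by nlinarith [hu.1, hu.2]) _), mul_assoc]

lemma ae_mem_Icc_PiMeasure (a : ℝ) : ∀ᵐ u ∂(PiMeasure a), u ∈ Icc (-1 : ℝ) 1 := by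
  by_cases ha : a = -(1 / 2)
  · subst ha
    rw [PiMeasure_neg_half]
    refine Measure.ae_smul_measure (ae_add_measure_iff.2 ⟨?_, ?_⟩) _ <;>
      exact (ae_dirac_iff measurableSet_Icc).2 (by norm_num)
  · rw [PiMeasure_of_ne ha]
    exact (withDensity_absolutelyContinuous _ _).ae_le (ae_restrict_mem measurableSet_Icc)

lemma setLIntegral_Ioc_ofReal_eq {f : ℝ → ℝ} {x y : ℝ} (hxy : x ≤ y)
    (hf : IntervalIntegrable f volume x y) (hnn : ∀ u ∈ Ioc x y, 0 ≤ f u) :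
    ∫⁻ u in Ioc x y, ENNReal.ofReal (f u) = ENNReal.ofReal (∫ u in x..y, f u) := by
  rw [intervalIntegral.integral_of_le hxy, ofReal_integral_eq_lintegral_ofReal
    ((intervalIntegrable_iff_integrableOn_Ioc_of_le hxy).1 hf)
    ((ae_restrict_iff' measurableSet_Ioc).2 (ae_of_all _ hnn))]

lemma setLIntegral_Ioc_one_sub_rpow {c ρ : ℝ} (hc : -1 < c) (hρ : ρ ≤ 1) :
    ∫⁻ u in Ioc ρ 1, ENNReal.ofReal ((1 - u) ^ c) =
      ENNReal.ofReal ((1 - ρ) ^ (c + 1) / (c + 1)) := by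
  have hint : IntervalIntegrable (fun u : ℝ => (1 - u) ^ c) volume ρ 1 := by
    simpa using (intervalIntegral.intervalIntegrable_rpow' hc (a := 1 - ρ) (b := 0)).comp_sub_left 1
  rw [setLIntegral_Ioc_ofReal_eq hρ hint fun u hu => rpow_nonneg (by linarith [hu.2]) _,
    intervalIntegral.integral_comp_sub_left (fun x => x ^ c), sub_self,
    integral_rpow (Or.inl hc), zero_rpow (by linarith), sub_zero]

lemma setLIntegral_Ioc_one_sub_rpow_le_of_lt_neg_one {e ρ : ℝ} (he : e < -1) (hρ₀ : 0 ≤ ρ)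
    (hρ₁ : ρ < 1) :
    ∫⁻ u in Ioc 0 ρ, ENNReal.ofReal ((1 - u) ^ e) ≤
      ENNReal.ofReal ((1 - ρ) ^ (e + 1) / -(e + 1)) := by
  have h0 : (0 : ℝ) ∉ uIcc (1 - ρ) 1 := by
    rw [uIcc_of_le (by linarith)]
    exact fun h => by linarith [h.1]
  have hint : IntervalIntegrable (fun u : ℝ => (1 - u) ^ e) volume 0 ρ := by
    simpa using ((intervalIntegral.intervalIntegrable_rpow (Or.inr h0)).comp_sub_left 1).symm
  rw [setLIntegral_Ioc_ofReal_eq hρ₀ hint fun u hu => rpow_nonneg (by linarith [hu.2]) _,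
    intervalIntegral.integral_comp_sub_left (fun x => x ^ e), sub_zero,
    integral_rpow (Or.inr ⟨by linarith, h0⟩), one_rpow]
  refine ENNReal.ofReal_le_ofReal ?_
  rw [← neg_div_neg_eq, neg_sub]
  exact div_le_div_of_nonneg_right (by linarith) (by linarith)

lemma setLIntegral_Ioc_one_add_rpow {c : ℝ} (hc : -1 < c) :
    ∫⁻ u in Ioc (-1) 0, ENNReal.ofReal ((1 + u) ^ c) = ENNReal.ofReal (1 / (c + 1)) := by
  have hint : IntervalIntegrable (fun u : ℝ => (1 + u) ^ c) volume (-1) 0 := by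
    simpa using (intervalIntegral.intervalIntegrable_rpow' hc (a := 0) (b := 1)).comp_add_left 1
  rw [setLIntegral_Ioc_ofReal_eq (by norm_num) hint fun u hu => rpow_nonneg (by linarith [hu.1]) _,
    intervalIntegral.integral_comp_add_left (fun x => x ^ c), integral_rpow (Or.inl hc)]
  norm_num [zero_rpow (show c + 1 ≠ 0 by linarith)]

lemma setLIntegral_ofReal_mul_le {α : Type*} [MeasurableSpace α] {μ : Measure α} {s : Set α}
    (hs : MeasurableSet s) {f g h : α → ℝ} {K : ℝ} (hK : 0 ≤ K) (hf : ∀ u ∈ s, 0 ≤ f u)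
    (hfg : ∀ u ∈ s, f u * g u ≤ K * h u) :
    ∫⁻ u in s, ENNReal.ofReal (f u) * ENNReal.ofReal (g u) ∂μ ≤
      ENNReal.ofReal K * ∫⁻ u in s, ENNReal.ofReal (h u) ∂μ := by
  rw [← lintegral_const_mul' _ _ ENNReal.ofReal_ne_top]
  refine setLIntegral_mono' hs fun u hu => ?_
  rw [← ENNReal.ofReal_mul (hf u hu), ← ENNReal.ofReal_mul hK]
  exact ENNReal.ofReal_le_ofReal (hfg u hu)

lemma rpow_le_max_one_two_rpow {w : ℝ} (c : ℝ) (h₁ : 1 ≤ w) (h₂ : w ≤ 2) :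
    w ^ c ≤ max 1 (2 ^ c) := by
  rcases le_total 0 c with hc | hc
  · exact (rpow_le_rpow (by linarith) h₂ hc).trans (le_max_right _ _)
  · exact (rpow_le_one_of_one_le_of_nonpos h₁ hc).trans (le_max_left _ _)

lemma one_sub_sq_rpow_le {u : ℝ} (c : ℝ) (hu₀ : 0 ≤ u) (hu₁ : u ≤ 1) :
    (1 - u ^ 2) ^ c ≤ max 1 (2 ^ c) * (1 - u) ^ c := by
  rw [show 1 - u ^ 2 = (1 - u) * (1 + u) by ring, mul_rpow (by linarith) (by linarith), mul_comm]
  exact mul_le_mul_of_nonneg_right (rpow_le_max_one_two_rpow c (by linarith) (by linarith))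
    (rpow_nonneg (by linarith) _)

lemma one_div_rpow_le_one_div_rpow {x y p : ℝ} (hy : 0 < y) (hyx : y ≤ x) (hp : 0 ≤ p) :
    1 / x ^ p ≤ 1 / y ^ p :=
  one_div_le_one_div_of_le (rpow_pos_of_pos hy p) (rpow_le_rpow hy.le hyx hp)

lemma one_div_one_sub_mul_rpow_le {ρ u p : ℝ} (hρ₀ : 0 ≤ ρ) (hρ₁ : ρ < 1) (hu : u ≤ 1)
    (hp : 0 ≤ p) : 1 / (1 - ρ * u) ^ p ≤ (1 - ρ) ^ (-p) := by
  rw [rpow_neg (by linarith), inv_eq_one_div]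
  exact one_div_rpow_le_one_div_rpow (by linarith) (by nlinarith) hp

section OneVariable

variable {a p m ρ : ℝ}

lemma setLIntegral_Ioc_neg_one_zero_weight_mul_le (ha : -(1 / 2) < a) (hp : 0 ≤ p) (hρ : 0 ≤ ρ) :
    ∫⁻ u in Ioc (-1) 0, ENNReal.ofReal ((1 - u ^ 2) ^ (a - 1 / 2)) *
        ENNReal.ofReal (1 / (1 - ρ * u) ^ p) ≤
      ENNReal.ofReal (max 1 (2 ^ (a - 1 / 2)) * (1 / (a + 1 / 2))) := by
  refine (setLIntegral_ofReal_mul_le measurableSet_Ioc (K := max 1 (2 ^ (a - 1 / 2)))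
    (h := fun u => (1 + u) ^ (a - 1 / 2)) (by positivity)
    (fun u hu => rpow_nonneg (by nlinarith [hu.1, hu.2]) _) fun u hu => ?_).trans ?_
  · have hdens : (1 - u ^ 2) ^ (a - 1 / 2) ≤ max 1 (2 ^ (a - 1 / 2)) * (1 + u) ^ (a - 1 / 2) := by
      simpa using one_sub_sq_rpow_le (u := -u) (a - 1 / 2) (by linarith [hu.2]) (by linarith [hu.1])
    have hker : 1 / (1 - ρ * u) ^ p ≤ 1 := by
      simpa using one_div_rpow_le_one_div_rpow one_pos (by nlinarith [hu.2]) hp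
    calc (1 - u ^ 2) ^ (a - 1 / 2) * (1 / (1 - ρ * u) ^ p) ≤ (1 - u ^ 2) ^ (a - 1 / 2) :=
          mul_le_of_le_one_right (rpow_nonneg (by nlinarith [hu.1, hu.2]) _) hker
      _ ≤ _ := hdens
  · rw [setLIntegral_Ioc_one_add_rpow (by linarith), ← ENNReal.ofReal_mul (by positivity),
      show a - 1 / 2 + 1 = a + 1 / 2 by ring]

lemma setLIntegral_Ioc_zero_weight_mul_le (hma : m ≤ a + 1 / 2) (hmp : m < p) (hp : 0 ≤ p)
    (hρ₀ : 0 ≤ ρ) (hρ₁ : ρ < 1) :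
    ∫⁻ u in Ioc 0 ρ, ENNReal.ofReal ((1 - u ^ 2) ^ (a - 1 / 2)) *
        ENNReal.ofReal (1 / (1 - ρ * u) ^ p) ≤
      ENNReal.ofReal (max 1 (2 ^ (a - 1 / 2)) * ((1 - ρ) ^ (m - p) / (p - m))) := by
  refine (setLIntegral_ofReal_mul_le measurableSet_Ioc (K := max 1 (2 ^ (a - 1 / 2)))
    (h := fun u => (1 - u) ^ (m - p - 1)) (by positivity)
    (fun u hu => rpow_nonneg (by nlinarith [hu.1, hu.2]) _) fun u hu => ?_).trans ?_
  · have hu₀ : 0 < 1 - u := by linarith [hu.2]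
    have hdens := one_sub_sq_rpow_le (a - 1 / 2) hu.1.le (by linarith [hu.2])
    have hker : 1 / (1 - ρ * u) ^ p ≤ 1 / (1 - u) ^ p :=
      one_div_rpow_le_one_div_rpow hu₀ (by nlinarith [hu.1]) hp
    calc (1 - u ^ 2) ^ (a - 1 / 2) * (1 / (1 - ρ * u) ^ p)
        ≤ max 1 (2 ^ (a - 1 / 2)) * (1 - u) ^ (a - 1 / 2) * (1 / (1 - u) ^ p) :=
          mul_le_mul hdens hker (div_nonneg zero_le_one (rpow_nonneg (by nlinarith [hu.1]) _))
            (by positivity)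
      _ = max 1 (2 ^ (a - 1 / 2)) * (1 - u) ^ (a - 1 / 2 - p) := by
          rw [rpow_sub hu₀ (a - 1 / 2) p]; ring
      _ ≤ max 1 (2 ^ (a - 1 / 2)) * (1 - u) ^ (m - p - 1) :=
          mul_le_mul_of_nonneg_left
            (rpow_le_rpow_of_exponent_ge hu₀ (by linarith [hu.1]) (by linarith)) (by positivity)
  · rw [ENNReal.ofReal_mul (by positivity)]
    gcongr
    have h := setLIntegral_Ioc_one_sub_rpow_le_of_lt_neg_one (e := m - p - 1) (by linarith) hρ₀ hρ₁
    rwa [show m - p - 1 + 1 = m - p by ring, show -(m - p) = p - m by ring] at h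

lemma setLIntegral_Ioc_one_weight_mul_le (ha : -(1 / 2) < a) (hp : 0 ≤ p) (hρ₀ : 0 ≤ ρ)
    (hρ₁ : ρ < 1) :
    ∫⁻ u in Ioc ρ 1, ENNReal.ofReal ((1 - u ^ 2) ^ (a - 1 / 2)) *
        ENNReal.ofReal (1 / (1 - ρ * u) ^ p) ≤
      ENNReal.ofReal (max 1 (2 ^ (a - 1 / 2)) * (1 - ρ) ^ (-p) *
        ((1 - ρ) ^ (a + 1 / 2) / (a + 1 / 2))) := by
  refine (setLIntegral_ofReal_mul_le measurableSet_Ioc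
    (K := max 1 (2 ^ (a - 1 / 2)) * (1 - ρ) ^ (-p)) (h := fun u => (1 - u) ^ (a - 1 / 2))
    (by positivity) (fun u hu => rpow_nonneg (by nlinarith [hu.1, hu.2]) _) fun u hu => ?_).trans ?_
  · have hdens := one_sub_sq_rpow_le (a - 1 / 2) (hρ₀.trans hu.1.le) hu.2
    have hker := one_div_one_sub_mul_rpow_le hρ₀ hρ₁ hu.2 hp
    calc (1 - u ^ 2) ^ (a - 1 / 2) * (1 / (1 - ρ * u) ^ p)
        ≤ max 1 (2 ^ (a - 1 / 2)) * (1 - u) ^ (a - 1 / 2) * (1 - ρ) ^ (-p) :=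
          mul_le_mul hdens hker (div_nonneg zero_le_one (rpow_nonneg (by nlinarith [hu.2]) _))
            (mul_nonneg (by positivity) (rpow_nonneg (by linarith [hu.2]) _))
      _ = _ := by ring
  · rw [setLIntegral_Ioc_one_sub_rpow (by linarith) hρ₁.le, ← ENNReal.ofReal_mul (by positivity),
      show a - 1 / 2 + 1 = a + 1 / 2 by ring]

lemma setLIntegral_Ioc_neg_one_one_weight_mul_le (ha : -(1 / 2) < a) (hma : m ≤ a + 1 / 2)
    (hmp : m < p) (hp : 0 ≤ p) (hρ₀ : 0 ≤ ρ) (hρ₁ : ρ < 1) :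
    ∫⁻ u in Ioc (-1) 1, ENNReal.ofReal ((1 - u ^ 2) ^ (a - 1 / 2)) *
        ENNReal.ofReal (1 / (1 - ρ * u) ^ p) ≤
      ENNReal.ofReal (max 1 (2 ^ (a - 1 / 2)) * (2 / (a + 1 / 2) + 1 / (p - m)) *
        (1 - ρ) ^ (m - p)) := by
  set M := max 1 ((2 : ℝ) ^ (a - 1 / 2))
  have hM : 0 ≤ M := by positivity
  have hδ : 0 < 1 - ρ := by linarith
  have hsplit : Ioc (-1 : ℝ) 1 = Ioc (-1) 0 ∪ (Ioc 0 ρ ∪ Ioc ρ 1) := by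
    rw [Ioc_union_Ioc_eq_Ioc hρ₀ hρ₁.le, Ioc_union_Ioc_eq_Ioc (by norm_num) zero_le_one]
  rw [hsplit]
  refine (lintegral_union_le _ _ _).trans <|
    (add_le_add_right (lintegral_union_le _ _ _) _).trans ?_
  refine (add_le_add (setLIntegral_Ioc_neg_one_zero_weight_mul_le ha hp hρ₀) <| add_le_add
    (setLIntegral_Ioc_zero_weight_mul_le hma hmp hp hρ₀ hρ₁)
    (setLIntegral_Ioc_one_weight_mul_le ha hp hρ₀ hρ₁)).trans ?_
  have ha' : 0 < a + 1 / 2 := by linarith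
  have hpm : 0 < p - m := by linarith
  rw [← ENNReal.ofReal_add (by positivity) (by positivity),
    ← ENNReal.ofReal_add (by positivity) (by positivity)]
  refine ENNReal.ofReal_le_ofReal ?_
  have h₁ : 1 ≤ (1 - ρ) ^ (m - p) :=
    one_le_rpow_of_pos_of_le_one_of_nonpos hδ (by linarith) (by linarith)
  have h₂ : (1 - ρ) ^ (-p) * (1 - ρ) ^ (a + 1 / 2) ≤ (1 - ρ) ^ (m - p) := by
    rw [← rpow_add hδ]
    exact rpow_le_rpow_of_exponent_ge hδ (by linarith) (by linarith)
  calc M * (1 / (a + 1 / 2)) + (M * ((1 - ρ) ^ (m - p) / (p - m)) +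
        M * (1 - ρ) ^ (-p) * ((1 - ρ) ^ (a + 1 / 2) / (a + 1 / 2)))
      = M * (1 / (a + 1 / 2)) * 1 + M * (1 / (p - m)) * (1 - ρ) ^ (m - p) +
          M * (1 / (a + 1 / 2)) * ((1 - ρ) ^ (-p) * (1 - ρ) ^ (a + 1 / 2)) := by ring
    _ ≤ M * (1 / (a + 1 / 2)) * (1 - ρ) ^ (m - p) + M * (1 / (p - m)) * (1 - ρ) ^ (m - p) +
          M * (1 / (a + 1 / 2)) * (1 - ρ) ^ (m - p) := by gcongr
    _ = _ := by ring

end OneVariable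

theorem lintegral_PiMeasure_one_div_one_sub_mul_rpow_le {a p m : ℝ} (ha : -(1 / 2) ≤ a)
    (hm₀ : 0 ≤ m) (hma : m ≤ a + 1 / 2) (hmp : m < p) :
    ∃ C : ℝ, 0 < C ∧ ∀ ρ : ℝ, 0 ≤ ρ → ρ < 1 →
      ∫⁻ u, ENNReal.ofReal (1 / (1 - ρ * u) ^ p) ∂(PiMeasure a) ≤
        ENNReal.ofReal (C * (1 - ρ) ^ (m - p)) := by
  have hp : 0 ≤ p := by linarith
  rcases ha.eq_or_lt with rfl | ha
  · refine ⟨1, one_pos, fun ρ hρ₀ hρ₁ => ?_⟩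
    have hk : ∀ u ≤ (1 : ℝ), ENNReal.ofReal (1 / (1 - ρ * u) ^ p) ≤
        ENNReal.ofReal (1 * (1 - ρ) ^ (m - p)) := fun u hu => by
      rw [show m = 0 by linarith, one_mul, zero_sub]
      exact ENNReal.ofReal_le_ofReal (one_div_one_sub_mul_rpow_le hρ₀ hρ₁ hu hp)
    rw [lintegral_PiMeasure_neg_half]
    calc 2⁻¹ * (ENNReal.ofReal (1 / (1 - ρ * -1) ^ p) + ENNReal.ofReal (1 / (1 - ρ * 1) ^ p))
        ≤ 2⁻¹ * (ENNReal.ofReal (1 * (1 - ρ) ^ (m - p)) +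
            ENNReal.ofReal (1 * (1 - ρ) ^ (m - p))) :=
          mul_le_mul_right (add_le_add (hk (-1) (by norm_num)) (hk 1 le_rfl)) _
      _ = _ := by
          rw [← two_mul, ← mul_assoc,
            ENNReal.inv_mul_cancel two_ne_zero ENNReal.ofNat_ne_top, one_mul]
  · have hΓ : 0 < Gamma (a + 1) / (√π * Gamma (a + 1 / 2)) :=
      div_pos (Gamma_pos_of_pos (by linarith))
        (mul_pos (sqrt_pos.2 pi_pos) (Gamma_pos_of_pos (by linarith)))
    refine ⟨Gamma (a + 1) / (√π * Gamma (a + 1 / 2)) *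
        (max 1 (2 ^ (a - 1 / 2)) * (2 / (a + 1 / 2) + 1 / (p - m))), ?_, fun ρ hρ₀ hρ₁ => ?_⟩
    · have : 0 < a + 1 / 2 := by linarith
      have : 0 < p - m := by linarith
      positivity
    rw [lintegral_PiMeasure_of_ne ha.ne', mul_assoc, ENNReal.ofReal_mul hΓ.le]
    gcongr
    exact setLIntegral_Ioc_neg_one_one_weight_mul_le ha hma hmp hp hρ₀ hρ₁

theorem lintegral_PiMeasure_one_div_add_mul_rpow_le {a p m : ℝ} (ha : -(1 / 2) ≤ a)
    (hm₀ : 0 ≤ m) (hma : m ≤ a + 1 / 2) (hmp : m < p) :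
    ∃ C : ℝ, 0 < C ∧ ∀ A b : ℝ, 0 < A → 0 ≤ b →
      ∫⁻ u, ENNReal.ofReal (1 / (A + b * (1 - u)) ^ p) ∂(PiMeasure a) ≤
        ENNReal.ofReal (C * (A ^ (m - p) * (A + b) ^ (-m))) := by
  obtain ⟨C, hC, hbound⟩ := lintegral_PiMeasure_one_div_one_sub_mul_rpow_le ha hm₀ hma hmp
  refine ⟨C, hC, fun A b hA hb => ?_⟩
  have hAb : 0 < A + b := by linarith
  have hρ : 1 - b / (A + b) = A / (A + b) := by field_simp; ring
  have hfactor : ∀ᵐ u ∂(PiMeasure a), ENNReal.ofReal (1 / (A + b * (1 - u)) ^ p) =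
      ENNReal.ofReal ((A + b) ^ (-p)) * ENNReal.ofReal (1 / (1 - b / (A + b) * u) ^ p) := by
    filter_upwards [ae_mem_Icc_PiMeasure a] with u hu
    have hu' : 0 ≤ 1 - b / (A + b) * u := by
      have : b / (A + b) ≤ 1 := (div_le_one hAb).2 (by linarith)
      nlinarith [hu.1, hu.2, div_nonneg hb hAb.le]
    rw [← ENNReal.ofReal_mul (by positivity), show A + b * (1 - u) = (A + b) * (1 - b / (A + b) * u)
      by field_simp; ring, mul_rpow hAb.le hu', rpow_neg hAb.le]
    congr 1
    ring
  rw [lintegral_congr_ae hfactor, lintegral_const_mul' _ _ ENNReal.ofReal_ne_top]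
  refine (mul_le_mul_right (hbound _ (div_nonneg hb hAb.le)
    ((div_lt_one hAb).2 (by linarith))) _).trans_eq ?_
  rw [← ENNReal.ofReal_mul (by positivity), hρ, div_rpow hA.le hAb.le]
  have hexp : (A + b) ^ (-m) = (A + b) ^ (-p) / (A + b) ^ (m - p) := by
    rw [← rpow_sub hAb]
    congr 1
    ring
  rw [hexp]
  congr 1
  ring

theorem lintegral_lintegral_PiMeasure_one_div_rpow_le {a₁ a₂ p m₁ m₂ : ℝ} (ha₁ : -(1 / 2) ≤ a₁)
    (ha₂ : -(1 / 2) ≤ a₂) (hm₁ : 0 ≤ m₁) (hm₁a : m₁ ≤ a₁ + 1 / 2) (hm₂ : 0 ≤ m₂)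
    (hm₂a : m₂ ≤ a₂ + 1 / 2) (hmp : m₁ + m₂ < p) :
    ∃ C : ℝ, 0 < C ∧ ∀ A b₁ b₂ : ℝ, 0 < A → 0 ≤ b₁ → 0 ≤ b₂ →
      ∫⁻ u, ∫⁻ v, ENNReal.ofReal (1 / (A + b₁ * (1 - u) + b₂ * (1 - v)) ^ p)
          ∂(PiMeasure a₂) ∂(PiMeasure a₁) ≤
        ENNReal.ofReal (C * (A ^ (m₁ + m₂ - p) * ((A + b₁) ^ (-m₁) * (A + b₂) ^ (-m₂)))) := by
  obtain ⟨C₂, hC₂, H₂⟩ := lintegral_PiMeasure_one_div_add_mul_rpow_le ha₂ hm₂ hm₂a (by linarith)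
  obtain ⟨C₁, hC₁, H₁⟩ := lintegral_PiMeasure_one_div_add_mul_rpow_le (p := p - m₂) ha₁ hm₁ hm₁a
    (by linarith)
  refine ⟨C₂ * C₁, mul_pos hC₂ hC₁, fun A b₁ b₂ hA hb₁ hb₂ => ?_⟩
  have hAb₂ : 0 < A + b₂ := by linarith
  have hinner : ∀ᵐ u ∂(PiMeasure a₁),
      ∫⁻ v, ENNReal.ofReal (1 / (A + b₁ * (1 - u) + b₂ * (1 - v)) ^ p) ∂(PiMeasure a₂) ≤
        ENNReal.ofReal (C₂ * (A + b₂) ^ (-m₂)) *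
          ENNReal.ofReal (1 / (A + b₁ * (1 - u)) ^ (p - m₂)) := by
    filter_upwards [ae_mem_Icc_PiMeasure a₁] with u hu
    have hb₁u : 0 ≤ b₁ * (1 - u) := mul_nonneg hb₁ (by linarith [hu.2])
    have hA' : 0 < A + b₁ * (1 - u) := by linarith
    refine (H₂ _ b₂ hA' hb₂).trans ?_
    rw [← ENNReal.ofReal_mul (by positivity)]
    refine ENNReal.ofReal_le_ofReal ?_
    have hexp : (A + b₁ * (1 - u)) ^ (m₂ - p) = 1 / (A + b₁ * (1 - u)) ^ (p - m₂) := by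
      rw [show m₂ - p = -(p - m₂) by ring, rpow_neg hA'.le, one_div]
    have hmono : (A + b₁ * (1 - u) + b₂) ^ (-m₂) ≤ (A + b₂) ^ (-m₂) :=
      rpow_le_rpow_of_nonpos hAb₂ (by linarith) (by linarith)
    calc C₂ * ((A + b₁ * (1 - u)) ^ (m₂ - p) * (A + b₁ * (1 - u) + b₂) ^ (-m₂))
        ≤ C₂ * ((A + b₁ * (1 - u)) ^ (m₂ - p) * (A + b₂) ^ (-m₂)) := by gcongr
      _ = _ := by rw [hexp]; ring
  refine (lintegral_mono_ae hinner).trans ?_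
  rw [lintegral_const_mul' _ _ ENNReal.ofReal_ne_top]
  refine (mul_le_mul_right (H₁ A b₁ hA hb₁) _).trans_eq ?_
  rw [← ENNReal.ofReal_mul (by positivity), show m₁ - (p - m₂) = m₁ + m₂ - p by ring]
  congr 1
  ring

lemma jacobiMeasure_jacobiBall_le {α β : ℝ} (hα : -(1 / 2) ≤ α) (hβ : -(1 / 2) ≤ β) (θ : ℝ)
    {r : ℝ} (hr : 0 ≤ r) :
    jacobiMeasure α β (jacobiBall θ r) ≤ ENNReal.ofReal
      (2 * r * ((sin (θ / 2) + r) ^ (2 * α + 1) * (cos (θ / 2) + r) ^ (2 * β + 1))) := by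
  have hmeas : MeasurableSet (jacobiBall θ r) := measurableSet_Ioo.inter measurableSet_Ioo
  have hsub : jacobiBall θ r ⊆ Ioo 0 π := inter_subset_right
  rw [jacobiMeasure, withDensity_apply _ hmeas, Measure.restrict_restrict hmeas,
    inter_eq_left.2 hsub]
  have hdens : ∀ x ∈ jacobiBall θ r,
      ENNReal.ofReal (sin (x / 2) ^ (2 * α + 1) * cos (x / 2) ^ (2 * β + 1)) ≤
        ENNReal.ofReal ((sin (θ / 2) + r) ^ (2 * α + 1) * (cos (θ / 2) + r) ^ (2 * β + 1)) := by
    rintro x ⟨⟨hx₁, hx₂⟩, hx₀, hxπ⟩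
    have hdist : |x / 2 - θ / 2| ≤ r := abs_le.2 ⟨by linarith, by linarith⟩
    have hsin₀ : 0 ≤ sin (x / 2) := sin_nonneg_of_nonneg_of_le_pi (by linarith) (by linarith)
    have hcos₀ : 0 ≤ cos (x / 2) := cos_nonneg_of_mem_Icc ⟨by linarith, by linarith⟩
    have hsin : sin (x / 2) ≤ sin (θ / 2) + r := by
      linarith [(abs_sub_le_iff.1 ((abs_sin_sub_sin_le _ _).trans hdist)).1]
    have hcos : cos (x / 2) ≤ cos (θ / 2) + r := by
      linarith [(abs_sub_le_iff.1 ((abs_cos_sub_cos_le _ _).trans hdist)).1]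
    have : 0 ≤ (sin (θ / 2) + r) ^ (2 * α + 1) := rpow_nonneg (hsin₀.trans hsin) _
    gcongr <;> linarith
  calc ∫⁻ x in jacobiBall θ r,
        ENNReal.ofReal (sin (x / 2) ^ (2 * α + 1) * cos (x / 2) ^ (2 * β + 1))
      ≤ ∫⁻ _ in jacobiBall θ r,
          ENNReal.ofReal ((sin (θ / 2) + r) ^ (2 * α + 1) * (cos (θ / 2) + r) ^ (2 * β + 1)) :=
        setLIntegral_mono' hmeas hdens
    _ ≤ ENNReal.ofReal ((sin (θ / 2) + r) ^ (2 * α + 1) * (cos (θ / 2) + r) ^ (2 * β + 1)) *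
          ENNReal.ofReal (2 * r) := by
        rw [setLIntegral_const]
        gcongr
        refine (measure_mono inter_subset_left).trans_eq ?_
        rw [volume_Ioo]
        congr 1
        ring
    _ = _ := by rw [mul_comm, ← ENNReal.ofReal_mul (by positivity)]

lemma sq_div_25_le_one_sub_cos_half {x : ℝ} (hx : |x| ≤ 2 * π) : x ^ 2 / 25 ≤ 1 - cos (x / 2) := by
  have hcos := cos_le_one_sub_mul_cos_sq (x := x / 2) (by rw [abs_div, abs_two]; linarith)
  have hπ : 2 * π ^ 2 ≤ 25 := by nlinarith [pi_lt_d2, pi_pos]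
  have hπ' : x ^ 2 / 25 ≤ 2 / π ^ 2 * (x / 2) ^ 2 := by
    rw [div_mul_eq_mul_div, le_div_iff₀ (by positivity)]
    nlinarith [sq_nonneg x]
  linarith

lemma sq_add_div_ten_le_add_mul {x x' r A : ℝ} (hx : 0 ≤ x) (hx' : 0 ≤ x')
    (hxx' : |x - x'| ≤ r / 2) (hA : r ^ 2 / 25 ≤ A) : ((x + r) / 10) ^ 2 ≤ A + x * x' := by
  have hr : 0 ≤ r := by linarith [abs_nonneg (x - x')]
  have hxx'' := (abs_sub_le_iff.1 hxx').1
  rcases le_total r x with h | h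
  · nlinarith [sq_nonneg r, mul_nonneg hx hr]
  · nlinarith [mul_nonneg hx hx', mul_nonneg hx hr]

lemma rpow_mul_rpow_neg_mul_rpow_le {x x' r B γ m a : ℝ} (hx : 0 ≤ x) (hx' : 0 ≤ x') (hr : 0 < r)
    (hxx' : |x - x'| ≤ r / 2) (hγ : 0 ≤ γ) (hm : 0 ≤ m) (hB : ((x + r) / 10) ^ 2 ≤ B) :
    (x + x') ^ (2 * γ) * B ^ (-m) * (x + r) ^ a ≤
      2 ^ (2 * γ) * 10 ^ (2 * m) * (x + r) ^ (2 * γ - 2 * m + a) := by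
  have hy : 0 < x + r := by linarith
  have hB₀ : 0 ≤ B := (sq_nonneg _).trans hB
  have hpre : (x + x') ^ (2 * γ) ≤ 2 ^ (2 * γ) * (x + r) ^ (2 * γ) := by
    rw [← mul_rpow zero_le_two hy.le]
    exact rpow_le_rpow (by linarith) (by linarith [(abs_sub_le_iff.1 hxx').2]) (by linarith)
  have hker : B ^ (-m) ≤ 10 ^ (2 * m) * (x + r) ^ (-(2 * m)) := by
    calc B ^ (-m) ≤ (((x + r) / 10) ^ 2) ^ (-m) :=
          rpow_le_rpow_of_nonpos (by positivity) hB (by linarith)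
      _ = 10 ^ (2 * m) * (x + r) ^ (-(2 * m)) := by
          rw [← rpow_natCast_mul (by positivity), div_rpow hy.le (by norm_num),
            show ((2 : ℕ) : ℝ) * -m = -(2 * m) by push_cast; ring,
            rpow_neg (by norm_num : (0 : ℝ) ≤ 10),
            div_inv_eq_mul, mul_comm]
  calc (x + x') ^ (2 * γ) * B ^ (-m) * (x + r) ^ a
      ≤ 2 ^ (2 * γ) * (x + r) ^ (2 * γ) * (10 ^ (2 * m) * (x + r) ^ (-(2 * m))) * (x + r) ^ a := by
        gcongr
    _ = 2 ^ (2 * γ) * 10 ^ (2 * m) * (x + r) ^ (2 * γ - 2 * m + a) := by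
        rw [sub_eq_add_neg, rpow_add hy, rpow_add hy]
        ring

lemma two_mul_mul_rpow_neg_half_le {r A : ℝ} (hr : 0 < r) (hA : r ^ 2 / 25 ≤ A) :
    2 * r * A ^ (-(1 / 2) : ℝ) ≤ 10 := by
  have hA₀ : 0 < A := lt_of_lt_of_le (by positivity) hA
  have hsqrt : r / 5 ≤ √A := (le_sqrt (by positivity) hA₀.le).2 (by linarith)
  rw [rpow_neg hA₀.le, ← sqrt_eq_rpow, ← div_eq_mul_inv, div_le_iff₀ (sqrt_pos.2 hA₀)]
  linarith

lemma half_le_sin_half_or_half_le_cos_half {θ : ℝ} (hθ : θ ∈ Ioo 0 π) :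
    1 / 2 ≤ sin (θ / 2) ∨ 1 / 2 ≤ cos (θ / 2) := by
  have hs : 0 ≤ sin (θ / 2) :=
    sin_nonneg_of_nonneg_of_le_pi (by linarith [hθ.1]) (by linarith [hθ.2, pi_pos])
  have hc : 0 ≤ cos (θ / 2) :=
    cos_nonneg_of_mem_Icc ⟨by linarith [hθ.1, pi_pos], by linarith [hθ.2]⟩
  by_contra! h
  nlinarith [sin_sq_add_cos_sq (θ / 2)]

lemma qfun_eq (θ φ u v : ℝ) : qfun θ φ u v =
    (1 - sin (θ / 2) * sin (φ / 2) - cos (θ / 2) * cos (φ / 2)) +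
      sin (θ / 2) * sin (φ / 2) * (1 - u) + cos (θ / 2) * cos (φ / 2) * (1 - v) := by
  unfold qfun
  ring

lemma ofReal_mul_le_ofReal_div {P J V K : ℝ} {I m : ENNReal} (hP : 0 ≤ P) (hJ : 0 ≤ J)
    (hK : 0 < K) (hI : I ≤ ENNReal.ofReal J) (hm : m ≤ ENNReal.ofReal V) (hPJV : P * J * V ≤ K) :
    ENNReal.ofReal P * I ≤ ENNReal.ofReal K / m := by
  rw [ENNReal.le_div_iff_mul_le (Or.inr (ENNReal.ofReal_pos.2 hK).ne')
    (Or.inl (ne_top_of_le_ne_top ENNReal.ofReal_ne_top hm))]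
  calc ENNReal.ofReal P * I * m ≤ ENNReal.ofReal P * ENNReal.ofReal J * ENNReal.ofReal V := by
        gcongr
    _ = ENNReal.ofReal (P * J * V) := by
        rw [ENNReal.ofReal_mul (mul_nonneg hP hJ), ENNReal.ofReal_mul hP]
    _ ≤ ENNReal.ofReal K := ENNReal.ofReal_le_ofReal hPJV

theorem prefactor_mul_lintegral_qfun_le {α β γ₁ γ₂ p m₁ m₂ D E F θ φ : ℝ} {μ ν : Measure ℝ}
    (hα : -(1 / 2) ≤ α) (hβ : -(1 / 2) ≤ β) (hγ₁ : 0 ≤ γ₁) (hγ₂ : 0 ≤ γ₂) (hm₁ : 0 ≤ m₁)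
    (hm₂ : 0 ≤ m₂) (hD : 0 < D) (hmp : m₁ + m₂ - p = -(1 / 2))
    (HD : ∀ A b₁ b₂ : ℝ, 0 < A → 0 ≤ b₁ → 0 ≤ b₂ →
      ∫⁻ u, ∫⁻ v, ENNReal.ofReal (1 / (A + b₁ * (1 - u) + b₂ * (1 - v)) ^ p) ∂ν ∂μ ≤
        ENNReal.ofReal (D * (A ^ (m₁ + m₂ - p) * ((A + b₁) ^ (-m₁) * (A + b₂) ^ (-m₂)))))
    (hθ : θ ∈ Ioo 0 π) (hφ : φ ∈ Ioo 0 π) (hθφ : θ ≠ φ)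
    (hE : (sin (θ / 2) + |θ - φ|) ^ (2 * γ₁ - 2 * m₁ + (2 * α + 1)) ≤ E)
    (hF : (cos (θ / 2) + |θ - φ|) ^ (2 * γ₂ - 2 * m₂ + (2 * β + 1)) ≤ F) :
    ENNReal.ofReal ((sin (θ / 2) + sin (φ / 2)) ^ (2 * γ₁) *
        (cos (θ / 2) + cos (φ / 2)) ^ (2 * γ₂)) *
      ∫⁻ u, ∫⁻ v, ENNReal.ofReal (1 / qfun θ φ u v ^ p) ∂ν ∂μ ≤
      ENNReal.ofReal (10 * D * (2 ^ (2 * γ₁) * 10 ^ (2 * m₁) * E) *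
        (2 ^ (2 * γ₂) * 10 ^ (2 * m₂) * F)) / jacobiMeasure α β (jacobiBall θ |θ - φ|) := by
  obtain ⟨hθ₀, hθπ⟩ := hθ
  obtain ⟨hφ₀, hφπ⟩ := hφ
  have hr : 0 < |θ - φ| := abs_pos.2 (sub_ne_zero.2 hθφ)
  have hs : 0 ≤ sin (θ / 2) := sin_nonneg_of_nonneg_of_le_pi (by linarith) (by linarith)
  have hs' : 0 ≤ sin (φ / 2) := sin_nonneg_of_nonneg_of_le_pi (by linarith) (by linarith)
  have hc : 0 ≤ cos (θ / 2) := cos_nonneg_of_mem_Icc ⟨by linarith, by linarith⟩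
  have hc' : 0 ≤ cos (φ / 2) := cos_nonneg_of_mem_Icc ⟨by linarith, by linarith⟩
  have hhalf : |θ / 2 - φ / 2| = |θ - φ| / 2 := by
    rw [← sub_div, abs_div, abs_two]
  have hss' : |sin (θ / 2) - sin (φ / 2)| ≤ |θ - φ| / 2 := hhalf ▸ abs_sin_sub_sin_le _ _
  have hcc' : |cos (θ / 2) - cos (φ / 2)| ≤ |θ - φ| / 2 := hhalf ▸ abs_cos_sub_cos_le _ _
  set A := 1 - sin (θ / 2) * sin (φ / 2) - cos (θ / 2) * cos (φ / 2)
  have hA : |θ - φ| ^ 2 / 25 ≤ A := by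
    have h := sq_div_25_le_one_sub_cos_half (x := θ - φ) (abs_le.2 ⟨by linarith, by linarith⟩)
    rw [sq_abs]
    convert h using 1
    rw [sub_div, cos_sub]
    ring
  have hA₀ : 0 < A := lt_of_lt_of_le (by positivity) hA
  have hI : ∫⁻ u, ∫⁻ v, ENNReal.ofReal (1 / qfun θ φ u v ^ p) ∂ν ∂μ ≤ ENNReal.ofReal
      (D * (A ^ (-(1 / 2) : ℝ) * ((A + sin (θ / 2) * sin (φ / 2)) ^ (-m₁) *
        (A + cos (θ / 2) * cos (φ / 2)) ^ (-m₂)))) := by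
    simpa only [qfun_eq, hmp] using HD A _ _ hA₀ (mul_nonneg hs hs') (mul_nonneg hc hc')
  have hE₀ : 0 < E := (rpow_pos_of_pos (by positivity) _).trans_le hE
  have hF₀ : 0 < F := (rpow_pos_of_pos (by positivity) _).trans_le hF
  refine ofReal_mul_le_ofReal_div (by positivity) (by positivity) (by positivity) hI
    (jacobiMeasure_jacobiBall_le hα hβ θ hr.le) ?_
  calc _ = D * (2 * |θ - φ| * A ^ (-(1 / 2) : ℝ)) *
        ((sin (θ / 2) + sin (φ / 2)) ^ (2 * γ₁) * (A + sin (θ / 2) * sin (φ / 2)) ^ (-m₁) *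
          (sin (θ / 2) + |θ - φ|) ^ (2 * α + 1)) *
        ((cos (θ / 2) + cos (φ / 2)) ^ (2 * γ₂) * (A + cos (θ / 2) * cos (φ / 2)) ^ (-m₂) *
          (cos (θ / 2) + |θ - φ|) ^ (2 * β + 1)) := by ring
    _ ≤ D * 10 * (2 ^ (2 * γ₁) * 10 ^ (2 * m₁) * E) * (2 ^ (2 * γ₂) * 10 ^ (2 * m₂) * F) := by
      gcongr D * ?_ * ?_ * ?_
      · exact two_mul_mul_rpow_neg_half_le hr hA
      · refine (rpow_mul_rpow_neg_mul_rpow_le hs hs' hr hss' hγ₁ hm₁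
          (sq_add_div_ten_le_add_mul hs hs' hss' hA)).trans ?_
        gcongr
      · refine (rpow_mul_rpow_neg_mul_rpow_le hc hc' hr hcc' hγ₂ hm₂
          (sq_add_div_ten_le_add_mul hc hc' hcc' hA)).trans ?_
        gcongr
    _ = _ := by ring

/-- first estimate of the generalized Lemma 4.3 (Lemma `L4.3*`). -/
theorem generalized_double_integral_q_bound_one (α β γ₁ γ₂ κ κ₁ κ₂ : ℝ)
    (hα : -(1 / 2) ≤ α) (hβ : -(1 / 2) ≤ β)
    (hγ₁ : 0 ≤ γ₁) (hγ₂ : 0 ≤ γ₂) (hκ : 0 ≤ κ) (hκ₁ : 0 ≤ κ₁) (hκ₂ : 0 ≤ κ₂) :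
    ∃ C : ℝ, 0 < C ∧
      ∀ θ ∈ Ioo (0 : ℝ) π, ∀ φ ∈ Ioo (0 : ℝ) π, θ ≠ φ →
        ENNReal.ofReal
            ((Real.sin (θ / 2) + Real.sin (φ / 2)) ^ (2 * γ₁) *
              (Real.cos (θ / 2) + Real.cos (φ / 2)) ^ (2 * γ₂)) *
          (∫⁻ u, ∫⁻ v,
              ENNReal.ofReal (1 / qfun θ φ u v ^ (α + β + 3 / 2 + γ₁ + γ₂ + κ))
            ∂(PiMeasure (β + γ₂ + κ + κ₂)) ∂(PiMeasure (α + γ₁ + κ + κ₁)))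
          ≤ ENNReal.ofReal C / jacobiMeasure α β (jacobiBall θ |θ - φ|) := by
  obtain ⟨D₁, hD₁, H₁⟩ := lintegral_lintegral_PiMeasure_one_div_rpow_le
    (a₁ := α + γ₁ + κ + κ₁) (a₂ := β + γ₂ + κ + κ₂) (p := α + β + 3 / 2 + γ₁ + γ₂ + κ)
    (m₁ := α + γ₁ + 1 / 2) (m₂ := β + γ₂ + κ + 1 / 2) (by linarith) (by linarith)
    (by linarith) (by linarith) (by linarith) (by linarith) (by linarith)
  obtain ⟨D₂, hD₂, H₂⟩ := lintegral_lintegral_PiMeasure_one_div_rpow_le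
    (a₁ := α + γ₁ + κ + κ₁) (a₂ := β + γ₂ + κ + κ₂) (p := α + β + 3 / 2 + γ₁ + γ₂ + κ)
    (m₁ := α + γ₁ + κ + 1 / 2) (m₂ := β + γ₂ + 1 / 2) (by linarith) (by linarith)
    (by linarith) (by linarith) (by linarith) (by linarith) (by linarith)
  set K₁ := 10 * D₁ * (2 ^ (2 * γ₁) * 10 ^ (2 * (α + γ₁ + 1 / 2)) * 1) *
    (2 ^ (2 * γ₂) * 10 ^ (2 * (β + γ₂ + κ + 1 / 2)) * (1 / 2) ^ (-(2 * κ)))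
  set K₂ := 10 * D₂ * (2 ^ (2 * γ₁) * 10 ^ (2 * (α + γ₁ + κ + 1 / 2)) * (1 / 2) ^ (-(2 * κ))) *
    (2 ^ (2 * γ₂) * 10 ^ (2 * (β + γ₂ + 1 / 2)) * 1)
  refine ⟨max K₁ K₂, lt_max_of_lt_left (by positivity), fun θ hθ φ hφ hθφ => ?_⟩
  have hr := abs_nonneg (θ - φ)
  rcases half_le_sin_half_or_half_le_cos_half hθ with hsin | hcos
  · refine (prefactor_mul_lintegral_qfun_le hα hβ hγ₁ hγ₂ (by linarith) (by linarith) hD₂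
      (by ring) H₂ hθ hφ hθφ ?_ ?_).trans
      (ENNReal.div_le_div_right (ENNReal.ofReal_le_ofReal (le_max_right _ _)) _)
    · rw [show 2 * γ₁ - 2 * (α + γ₁ + κ + 1 / 2) + (2 * α + 1) = -(2 * κ) by ring]
      exact rpow_le_rpow_of_nonpos (by norm_num) (by linarith) (by linarith)
    · rw [show 2 * γ₂ - 2 * (β + γ₂ + 1 / 2) + (2 * β + 1) = 0 by ring, rpow_zero]
  · refine (prefactor_mul_lintegral_qfun_le hα hβ hγ₁ hγ₂ (by linarith) (by linarith) hD₁
      (by ring) H₁ hθ hφ hθφ ?_ ?_).trans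
      (ENNReal.div_le_div_right (ENNReal.ofReal_le_ofReal (le_max_left _ _)) _)
    · rw [show 2 * γ₁ - 2 * (α + γ₁ + 1 / 2) + (2 * α + 1) = 0 by ring, rpow_zero]
    · rw [show 2 * γ₂ - 2 * (β + γ₂ + κ + 1 / 2) + (2 * β + 1) = -(2 * κ) by ring]
      exact rpow_le_rpow_of_nonpos (by norm_num) (by linarith) (by linarith)
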